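/- Reduction to a value: (1) if M →_v* V for some value V, then there exists a value V' such that M head-β_v-reduces (several steps) to V' and V' internal-v-reduces (several steps) to V; (2) M head-β_v-reduces (several steps) to a value V iff M head-v-reduces (several steps) to V. -/

import Mathlib

/-- Terms of the call-by-value λ-calculus, in de Bruijn notation. -/
inductive Term : Type
  | var : ℕ → Term
  | lam : Term → Term
  | app : Term → Term → Term

namespace Term

/-- Values are variables and abstractions. -/
def isValue : Term → Prop
  | var _ => True
  | lam _ => True
  | app _ _ => False

/-- Shift free de Bruijn indices ≥ d by one. -/
def lift (d : ℕ) : Term → Term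
  | var n => if n < d then var n else var (n+1)
  | lam M => lam (lift (d+1) M)
  | app M N => app (lift d M) (lift d N)

/-- Capture-avoiding substitution of `V` for index `k`. -/
def subst : Term → ℕ → Term → Term
  | var n, k, V => if n = k then V else if k < n then var (n-1) else var n
  | lam M, k, V => lam (subst M (k+1) (lift 0 V))
  | app M N, k, V => app (subst M k V) (subst N k V)

/-- Apply a term to a list of arguments: `appList M [M₁,…,Mₘ] = M M₁ … Mₘ`. -/
def appList : Term → List Term → Term
  | M, [] => M
  | M, N :: Ns => appList (app M N) Ns

/-- Root σ-reduction rules σ₁ and σ₃ (freshness handled by lifting). -/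
inductive SigmaBase : Term → Term → Prop
  | sigma1 (M N L : Term) :
      SigmaBase (app (app (lam M) N) L) (app (lam (app M (lift 0 L))) N)
  | sigma3 (V L N : Term) : isValue V →
      SigmaBase (app V (app (lam L) N)) (app (lam (app (lift 0 V) L)) N)

/-- Root rules of v-reduction: β_v, σ₁ and σ₃. -/
inductive VBase : Term → Term → Prop
  | beta (M V : Term) : isValue V → VBase (app (lam M) V) (subst M 0 V)
  | sigma1 (M N L : Term) :
      VBase (app (app (lam M) N) L) (app (lam (app M (lift 0 L))) N)
  | sigma3 (V L N : Term) : isValue V →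
      VBase (app V (app (lam L) N)) (app (lam (app (lift 0 V) L)) N)

/-- Contextual closure of a root relation. -/
inductive Ctx (r : Term → Term → Prop) : Term → Term → Prop
  | base {M M'} : r M M' → Ctx r M M'
  | lam {M M'} : Ctx r M M' → Ctx r (lam M) (lam M')
  | appL {M M'} (N : Term) : Ctx r M M' → Ctx r (app M N) (app M' N)
  | appR (M : Term) {N N'} : Ctx r N N' → Ctx r (app M N) (app M N')

/-- σ-reduction: contextual closure of σ₁ ∪ σ₃. -/
def SigmaRed : Term → Term → Prop := Ctx SigmaBase

/-- v-reduction: contextual closure of β_v ∪ σ₁ ∪ σ₃. -/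
def Red : Term → Term → Prop := Ctx VBase

/-- Head β_v-reduction. -/
inductive HeadBeta : Term → Term → Prop
  | beta (M V : Term) (Ms : List Term) : isValue V →
      HeadBeta (appList (app (lam M) V) Ms) (appList (subst M 0 V) Ms)
  | right (V : Term) {N N'} (Ms : List Term) : isValue V → HeadBeta N N' →
      HeadBeta (appList (app V N) Ms) (appList (app V N') Ms)

/-- Head σ-reduction. -/
inductive HeadSigma : Term → Term → Prop
  | sigma1 (M N L : Term) (Ms : List Term) :
      HeadSigma (appList (app (app (lam M) N) L) Ms)
                (appList (app (lam (app M (lift 0 L))) N) Ms)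
  | sigma3 (V L N : Term) (Ms : List Term) : isValue V →
      HeadSigma (appList (app V (app (lam L) N)) Ms)
                (appList (app (lam (app (lift 0 V) L)) N) Ms)
  | right (V : Term) {N N'} (Ms : List Term) : isValue V → HeadSigma N N' →
      HeadSigma (appList (app V N) Ms) (appList (app V N') Ms)

/-- Head v-reduction: head β_v ∪ head σ. -/
def HeadRed (M N : Term) : Prop := HeadBeta M N ∨ HeadSigma M N

/-- Internal v-reduction: v-steps that are not head v-steps. -/
def IntRed (M N : Term) : Prop := Red M N ∧ ¬ HeadRed M N

/-- Parallel reduction of the shuffling calculus λ_v^σ. -/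
inductive Par : Term → Term → Prop
  | var (x : ℕ) {Ms Ms' : List Term} : List.Forall₂ Par Ms Ms' →
      Par (appList (var x) Ms) (appList (var x) Ms')
  | lam {M M'} {Ms Ms' : List Term} : Par M M' → List.Forall₂ Par Ms Ms' →
      Par (appList (lam M) Ms) (appList (lam M') Ms')
  | beta {M M' V V'} {Ms Ms' : List Term} : isValue V → isValue V' →
      Par M M' → Par V V' → List.Forall₂ Par Ms Ms' →
      Par (appList (app (lam M) V) Ms) (appList (subst M' 0 V') Ms')
  | sigma1 {M M' N N' L L'} {Ms Ms' : List Term} :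
      Par M M' → Par N N' → Par L L' → List.Forall₂ Par Ms Ms' →
      Par (appList (app (app (lam M) N) L) Ms)
          (appList (app (lam (app M' (lift 0 L'))) N') Ms')
  | sigma3 {V V' L L' N N'} {Ms Ms' : List Term} : isValue V → isValue V' →
      Par V V' → Par L L' → Par N N' → List.Forall₂ Par Ms Ms' →
      Par (appList (app V (app (lam L) N)) Ms)
          (appList (app (lam (app (lift 0 V') L')) N') Ms')

/-- Internal parallel reduction. -/
inductive IPar : Term → Term → Prop
  | lam {N N'} : Par N N' → IPar (lam N) (lam N')
  | var (x : ℕ) : IPar (var x) (var x)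
  | right {V V' N N'} {Ms Ms' : List Term} : isValue V → isValue V' →
      Par V V' → IPar N N' → List.Forall₂ Par Ms Ms' →
      IPar (appList (app V N) Ms) (appList (app V' N') Ms')

/-- One-hole contexts. -/
inductive Ctx1 : Type
  | hole : Ctx1
  | lam : Ctx1 → Ctx1
  | appL : Ctx1 → Term → Ctx1
  | appR : Term → Ctx1 → Ctx1

/-- Capture-allowing hole filling. -/
def fill : Ctx1 → Term → Term
  | .hole, M => M
  | .lam C, M => lam (fill C M)
  | .appL C N, M => app (fill C M) N
  | .appR N C, M => app N (fill C M)

/-- `M` halts: head β_v-reduction from `M` reaches a value. -/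
def Halts (M : Term) : Prop := ∃ V, isValue V ∧ Relation.ReflTransGen HeadBeta M V

end Term

/-!
Takahashi's method. A v-step is a parallel step, and a parallel step factors into head v-steps
followed by an internal parallel step; an internal parallel step followed by a head step can in
turn be replaced by head steps followed by a parallel step. Pushing the internal steps forward
along a head reduction to a value leaves an internal parallel step into a value, which only
reduces under a λ. Head σ-steps are then eliminated: a head σ-step moves a redex `(λx.M) N`,
and any head β_v-reduction of the result to a value first evaluates `N` to a value `W` and then
fires that redex; evaluating `N` and firing the redex before the σ-step reaches the same term.
-/

namespace Term

open Relation

theorem isValue_lam (M : Term) : isValue (lam M) := trivial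

theorem isValue_lift {V : Term} (hV : isValue V) (d : ℕ) : isValue (lift d V) := by
  cases V with
  | var n => simp only [lift]; split <;> trivial
  | lam M => trivial
  | app M N => exact hV.elim

theorem isValue_subst {V U : Term} (hV : isValue V) (hU : isValue U) (k : ℕ) :
    isValue (subst V k U) := by
  cases V with
  | var n => simp only [subst]; split_ifs <;> trivial
  | lam M => trivial
  | app M N => exact hV.elim

theorem lift_lift_of_le (M : Term) {d e : ℕ} (hde : d ≤ e) :
    lift d (lift e M) = lift (e + 1) (lift d M) := by
  induction M generalizing d e with
  | var n => grind [lift]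
  | lam M ih => simp only [lift, ih (Nat.succ_le_succ hde)]
  | app M N ihM ihN => simp only [lift, ihM hde, ihN hde]

theorem subst_lift (M : Term) (k : ℕ) (V : Term) : subst (lift k M) k V = M := by
  induction M generalizing k V with
  | var n => grind [lift, subst]
  | lam M ih => simp only [lift, subst, ih]
  | app M N ihM ihN => simp only [lift, subst, ihM, ihN]

theorem lift_subst_of_le (M : Term) {k d : ℕ} (V : Term) (hdk : d ≤ k) :
    lift d (subst M k V) = subst (lift d M) (k + 1) (lift d V) := by
  induction M generalizing k d V with
  | var n => grind [lift, subst]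
  | lam M ih =>
    simp only [subst, lift, ih _ (Nat.succ_le_succ hdk), lift_lift_of_le V (Nat.zero_le d)]
  | app M N ihM ihN => simp only [subst, lift, ihM V hdk, ihN V hdk]

theorem lift_subst_of_ge (M : Term) {k d : ℕ} (V : Term) (hkd : k ≤ d) :
    lift d (subst M k V) = subst (lift (d + 1) M) k (lift d V) := by
  induction M generalizing k d V with
  | var n => grind [lift, subst]
  | lam M ih =>
    simp only [subst, lift, ih _ (Nat.succ_le_succ hkd), lift_lift_of_le V (Nat.zero_le d)]
  | app M N ihM ihN => simp only [subst, lift, ihM V hkd, ihN V hkd]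

theorem subst_subst_of_le (M : Term) {j k : ℕ} (W V : Term) (hjk : j ≤ k) :
    subst (subst M j W) k V = subst (subst M (k + 1) (lift j V)) j (subst W k V) := by
  induction M generalizing j k W V with
  | var n => grind [lift, subst, subst_lift]
  | lam M ih =>
    simp only [subst, ih _ _ (Nat.succ_le_succ hjk), lift_lift_of_le V (Nat.zero_le j),
      lift_subst_of_le W _ (Nat.zero_le k)]
  | app M N ihM ihN => simp only [subst, ihM W V hjk, ihN W V hjk]

theorem appList_concat (M : Term) (Ms : List Term) (N : Term) :
    appList M (Ms ++ [N]) = app (appList M Ms) N := by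
  induction Ms generalizing M with
  | nil => rfl
  | cons N' Ms ih => exact ih _

inductive BetaBase : Term → Term → Prop
  | beta (M V : Term) : isValue V → BetaBase (app (lam M) V) (subst M 0 V)

theorem VBase.not_isValue {M N : Term} (h : VBase M N) : ¬ isValue M := by
  cases h <;> exact id

theorem BetaBase.not_isValue {M N : Term} (h : BetaBase M N) : ¬ isValue M := by
  cases h; exact id

theorem BetaBase.vBase {M N : Term} (h : BetaBase M N) : VBase M N := by
  cases h with
  | beta M V hV => exact .beta M V hV

theorem SigmaBase.vBase {M N : Term} (h : SigmaBase M N) : VBase M N := by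
  cases h with
  | sigma1 M N L => exact .sigma1 M N L
  | sigma3 V L N hV => exact .sigma3 V L N hV

/-- Head reduction with binary applications: closure under the evaluation contexts
`E ::= [] | E N | V E`. -/
inductive HeadCtx (r : Term → Term → Prop) : Term → Term → Prop
  | base {M N : Term} : r M N → HeadCtx r M N
  | appL {M M' : Term} (N : Term) : HeadCtx r M M' → HeadCtx r (app M N) (app M' N)
  | appR {V N N' : Term} : isValue V → HeadCtx r N N' → HeadCtx r (app V N) (app V N')

namespace HeadCtx

variable {r s : Term → Term → Prop}

theorem mono (hrs : ∀ {M N}, r M N → s M N) {M N : Term} (h : HeadCtx r M N) :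
    HeadCtx s M N := by
  induction h with
  | base h => exact base (hrs h)
  | appL N _ ih => exact appL N ih
  | appR hV _ ih => exact appR hV ih

theorem appList {M M' : Term} (h : HeadCtx r M M') (Ms : List Term) :
    HeadCtx r (M.appList Ms) (M'.appList Ms) := by
  induction Ms generalizing M M' with
  | nil => exact h
  | cons N Ms ih => exact ih (appL N h)

theorem not_isValue (hr : ∀ {M N}, r M N → ¬ isValue M) {M N : Term} (h : HeadCtx r M N) :
    ¬ isValue M := by
  cases h with
  | base h => exact hr h
  | appL => exact id
  | appR => exact id

theorem reflTransGen_appL {M M' : Term} (h : ReflTransGen (HeadCtx r) M M') (N : Term) :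
    ReflTransGen (HeadCtx r) (app M N) (app M' N) :=
  h.lift (app · N) fun _ _ => appL N

theorem reflTransGen_appR {V N N' : Term} (hV : isValue V) (h : ReflTransGen (HeadCtx r) N N') :
    ReflTransGen (HeadCtx r) (app V N) (app V N') :=
  h.lift (app V) fun _ _ => appR hV

theorem vBase_cases {M N : Term} (h : HeadCtx VBase M N) :
    HeadCtx BetaBase M N ∨ HeadCtx SigmaBase M N := by
  induction h with
  | base h =>
    cases h with
    | beta M V hV => exact .inl (base (.beta M V hV))
    | sigma1 M N L => exact .inr (base (.sigma1 M N L))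
    | sigma3 V L N hV => exact .inr (base (.sigma3 V L N hV))
  | appL N _ ih => exact ih.imp (appL N) (appL N)
  | appR hV _ ih => exact ih.imp (appR hV) (appR hV)

end HeadCtx

theorem headBeta_eq : HeadBeta = HeadCtx BetaBase := by
  ext M N
  constructor
  · intro h
    induction h with
    | beta M V Ms hV => exact (HeadCtx.base (.beta M V hV)).appList Ms
    | right V Ms hV _ ih => exact (HeadCtx.appR hV ih).appList Ms
  · intro h
    induction h with
    | base h => cases h with
      | beta M V hV => exact .beta M V [] hV
    | appL N _ ih =>
      cases ih with
      | beta M V Ms hV => simpa only [appList_concat] using HeadBeta.beta M V (Ms ++ [N]) hV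
      | right V Ms hV h => simpa only [appList_concat] using HeadBeta.right V (Ms ++ [N]) hV h
    | appR hV _ ih => exact .right _ [] hV ih

theorem headSigma_eq : HeadSigma = HeadCtx SigmaBase := by
  ext M N
  constructor
  · intro h
    induction h with
    | sigma1 M N L Ms => exact (HeadCtx.base (.sigma1 M N L)).appList Ms
    | sigma3 V L N Ms hV => exact (HeadCtx.base (.sigma3 V L N hV)).appList Ms
    | right V Ms hV _ ih => exact (HeadCtx.appR hV ih).appList Ms
  · intro h
    induction h with
    | base h => cases h with
      | sigma1 M N L => exact .sigma1 M N L []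
      | sigma3 V L N hV => exact .sigma3 V L N [] hV
    | appL N _ ih =>
      cases ih with
      | sigma1 M N' L Ms => simpa only [appList_concat] using HeadSigma.sigma1 M N' L (Ms ++ [N])
      | sigma3 V L N' Ms hV =>
        simpa only [appList_concat] using HeadSigma.sigma3 V L N' (Ms ++ [N]) hV
      | right V Ms hV h => simpa only [appList_concat] using HeadSigma.right V (Ms ++ [N]) hV h
    | appR hV _ ih => exact .right _ [] hV ih

theorem headRed_eq : HeadRed = HeadCtx VBase := by
  ext M N
  rw [HeadRed, headBeta_eq, headSigma_eq]
  exact ⟨fun h => h.elim (HeadCtx.mono BetaBase.vBase) (HeadCtx.mono SigmaBase.vBase),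
    HeadCtx.vBase_cases⟩

theorem reflTransGen_red_lam {M M' : Term} (h : ReflTransGen Red M M') :
    ReflTransGen Red (lam M) (lam M') :=
  h.lift lam fun _ _ => Ctx.lam

theorem reflTransGen_red_app {M M' N N' : Term} (hM : ReflTransGen Red M M')
    (hN : ReflTransGen Red N N') : ReflTransGen Red (app M N) (app M' N') :=
  (hM.lift (app · N) fun _ _ => Ctx.appL N).trans (hN.lift (app M') fun _ _ => Ctx.appR M')

/-- Parallel reduction indexed by a weight that does not grow under substitution of values
(`SizedPar.subst`) and strictly exceeds the weight of every premise that `SizedPar.split`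
recurses on. -/
inductive SizedPar : ℕ → Term → Term → Prop
  | var (x : ℕ) : SizedPar 0 (var x) (var x)
  | lam {M M' : Term} {n : ℕ} : SizedPar n M M' → SizedPar 0 (lam M) (lam M')
  | app {M M' N N' : Term} {m n : ℕ} : SizedPar m M M' → SizedPar n N N' →
      SizedPar (m + n + 1) (app M N) (app M' N')
  | beta {M M' V V' : Term} {m n : ℕ} : isValue V → SizedPar m M M' → SizedPar n V V' →
      SizedPar (m + 1) (app (lam M) V) (subst M' 0 V')
  | sigma1 {M M' N N' L L' : Term} {k m n : ℕ} :
      SizedPar k M M' → SizedPar m N N' → SizedPar n L L' →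
      SizedPar (m + 1) (app (app (lam M) N) L) (app (lam (app M' (lift 0 L'))) N')
  | sigma3 {V V' L L' N N' : Term} {k m n : ℕ} : isValue V →
      SizedPar k V V' → SizedPar m L L' → SizedPar n N N' →
      SizedPar (n + 1) (app V (app (lam L) N)) (app (lam (app (lift 0 V') L')) N')

namespace SizedPar

theorem exists_refl (M : Term) : ∃ n, SizedPar n M M := by
  induction M with
  | var x => exact ⟨0, var x⟩
  | lam M ih => obtain ⟨_, h⟩ := ih; exact ⟨0, lam h⟩
  | app M N ihM ihN =>
    obtain ⟨_, hM⟩ := ihM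
    obtain ⟨_, hN⟩ := ihN
    exact ⟨_, app hM hN⟩

theorem of_red {M N : Term} (h : Red M N) : ∃ n, SizedPar n M N := by
  induction h with
  | base h =>
    cases h with
    | beta M V hV =>
      obtain ⟨_, hM⟩ := exists_refl M
      obtain ⟨_, hV'⟩ := exists_refl V
      exact ⟨_, beta hV hM hV'⟩
    | sigma1 M N L =>
      obtain ⟨_, hM⟩ := exists_refl M
      obtain ⟨_, hN⟩ := exists_refl N
      obtain ⟨_, hL⟩ := exists_refl L
      exact ⟨_, sigma1 hM hN hL⟩
    | sigma3 V L N hV =>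
      obtain ⟨_, hV'⟩ := exists_refl V
      obtain ⟨_, hL⟩ := exists_refl L
      obtain ⟨_, hN⟩ := exists_refl N
      exact ⟨_, sigma3 hV hV' hL hN⟩
  | lam _ ih => obtain ⟨_, h⟩ := ih; exact ⟨0, lam h⟩
  | appL N _ ih =>
    obtain ⟨_, hM⟩ := ih
    obtain ⟨_, hN⟩ := exists_refl N
    exact ⟨_, app hM hN⟩
  | appR M _ ih =>
    obtain ⟨_, hN⟩ := ih
    obtain ⟨_, hM⟩ := exists_refl M
    exact ⟨_, app hM hN⟩

theorem value_inv {n : ℕ} {V V' : Term} (hV : isValue V) (h : SizedPar n V V') :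
    n = 0 ∧ isValue V' := by
  cases h with
  | var x => exact ⟨rfl, trivial⟩
  | lam => exact ⟨rfl, trivial⟩
  | app | beta | sigma1 | sigma3 => exact hV.elim

theorem reflTransGen_red {n : ℕ} {M N : Term} (h : SizedPar n M N) : ReflTransGen Red M N := by
  induction h with
  | var x => exact .refl
  | lam _ ih => exact reflTransGen_red_lam ih
  | app _ _ ihM ihN => exact reflTransGen_red_app ihM ihN
  | beta hV _ hVV ihM ihV =>
    exact (reflTransGen_red_app (reflTransGen_red_lam ihM) ihV).tail
      (.base (.beta _ _ (hVV.value_inv hV).2))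
  | sigma1 _ _ _ ihM ihN ihL =>
    exact (reflTransGen_red_app (reflTransGen_red_app (reflTransGen_red_lam ihM) ihN)
      ihL).tail (.base (.sigma1 _ _ _))
  | sigma3 hV hVV _ _ ihV ihL ihN =>
    exact (reflTransGen_red_app ihV
      (reflTransGen_red_app (reflTransGen_red_lam ihL) ihN)).tail
      (.base (.sigma3 _ _ _ (hVV.value_inv hV).2))

theorem lift {n : ℕ} {M M' : Term} (h : SizedPar n M M') (d : ℕ) :
    SizedPar n (M.lift d) (M'.lift d) := by
  induction h generalizing d with
  | var x => simp only [Term.lift]; split_ifs <;> exact var _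
  | lam _ ih => exact lam (ih (d + 1))
  | app _ _ ihM ihN => exact app (ihM d) (ihN d)
  | @beta M M' V V' _ _ hV _ _ ihM ihV =>
    rw [Term.lift, lift_subst_of_ge M' V' (Nat.zero_le d)]
    exact beta (isValue_lift hV d) (ihM (d + 1)) (ihV d)
  | @sigma1 _ _ _ _ _ L' _ _ _ _ _ _ ihM ihN ihL =>
    simp only [Term.lift]
    rw [← lift_lift_of_le L' (Nat.zero_le d)]
    exact sigma1 (ihM (d + 1)) (ihN d) (ihL d)
  | @sigma3 _ V' _ _ _ _ _ _ _ hV _ _ _ ihV ihL ihN =>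
    simp only [Term.lift]
    rw [← lift_lift_of_le V' (Nat.zero_le d)]
    exact sigma3 (isValue_lift hV d) (ihV d) (ihL (d + 1)) (ihN d)

theorem subst {n m : ℕ} {M M' V V' : Term} (h : SizedPar n M M') (k : ℕ) (hV : isValue V)
    (hVV : SizedPar m V V') : ∃ n' ≤ n, SizedPar n' (M.subst k V) (M'.subst k V') := by
  obtain ⟨rfl, hV'⟩ := hVV.value_inv hV
  induction h generalizing k V V' with
  | var x =>
    simp only [Term.subst]
    split_ifs
    exacts [⟨0, le_rfl, hVV⟩, ⟨0, le_rfl, var _⟩, ⟨0, le_rfl, var _⟩]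
  | lam _ ih =>
    obtain ⟨_, -, h⟩ := ih (k + 1) (isValue_lift hV 0) (isValue_lift hV' 0) (hVV.lift 0)
    exact ⟨0, le_rfl, lam h⟩
  | app _ _ ihM ihN =>
    obtain ⟨_, hm, hM⟩ := ihM k hV hV' hVV
    obtain ⟨_, hn, hN⟩ := ihN k hV hV' hVV
    exact ⟨_, by omega, app hM hN⟩
  | @beta _ M' _ W' _ _ hW _ _ ihM ihW =>
    obtain ⟨m', hm, hM⟩ := ihM (k + 1) (isValue_lift hV 0) (isValue_lift hV' 0) (hVV.lift 0)
    obtain ⟨_, -, hW'⟩ := ihW k hV hV' hVV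
    refine ⟨m' + 1, by omega, ?_⟩
    rw [Term.subst, Term.subst, subst_subst_of_le M' W' V' (Nat.zero_le k)]
    exact beta (isValue_subst hW hV k) hM hW'
  | @sigma1 _ _ _ _ _ L' _ _ _ _ _ _ ihM ihN ihL =>
    obtain ⟨_, -, hM⟩ := ihM (k + 1) (isValue_lift hV 0) (isValue_lift hV' 0) (hVV.lift 0)
    obtain ⟨m', hm, hN⟩ := ihN k hV hV' hVV
    obtain ⟨_, -, hL⟩ := ihL k hV hV' hVV
    refine ⟨m' + 1, by omega, ?_⟩
    simp only [Term.subst]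
    rw [← lift_subst_of_le L' V' (Nat.zero_le k)]
    exact sigma1 hM hN hL
  | @sigma3 _ V₀' _ _ _ _ _ _ _ hV₀ _ _ _ ihV ihL ihN =>
    obtain ⟨_, -, hV₀'⟩ := ihV k hV hV' hVV
    obtain ⟨_, -, hL⟩ := ihL (k + 1) (isValue_lift hV 0) (isValue_lift hV' 0) (hVV.lift 0)
    obtain ⟨n', hn, hN⟩ := ihN k hV hV' hVV
    refine ⟨n' + 1, by omega, ?_⟩
    simp only [Term.subst]
    rw [← lift_subst_of_le V₀' V' (Nat.zero_le k)]
    exact sigma3 (isValue_subst hV₀ hV k) hV₀' hL hN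

end SizedPar

/-- Internal parallel reduction, i.e. `IPar` with binary applications: a parallel step that
leaves the head redex in place. -/
inductive IntPar : Term → Term → Prop
  | var (x : ℕ) : IntPar (var x) (var x)
  | lam {M M' : Term} {n : ℕ} : SizedPar n M M' → IntPar (lam M) (lam M')
  | appL {M M' N N' : Term} {n : ℕ} : ¬ isValue M → IntPar M M' → SizedPar n N N' →
      IntPar (app M N) (app M' N')
  | appR {V V' N N' : Term} : isValue V → IntPar V V' → IntPar N N' →
      IntPar (app V N) (app V' N')

namespace IntPar

theorem isValue_iff {M N : Term} (h : IntPar M N) : isValue M ↔ isValue N := by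
  cases h <;> exact Iff.rfl

theorem exists_sizedPar {M N : Term} (h : IntPar M N) : ∃ n, SizedPar n M N := by
  induction h with
  | var x => exact ⟨0, .var x⟩
  | lam h => exact ⟨0, .lam h⟩
  | appL _ _ hN ih => obtain ⟨_, hM⟩ := ih; exact ⟨_, .app hM hN⟩
  | appR _ _ _ ihV ihN =>
    obtain ⟨_, hV⟩ := ihV
    obtain ⟨_, hN⟩ := ihN
    exact ⟨_, .app hV hN⟩

theorem lam_inv {M B' : Term} (h : IntPar M (Term.lam B')) :
    ∃ B n, M = Term.lam B ∧ SizedPar n B B' := by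
  cases h with
  | lam h => exact ⟨_, _, rfl, h⟩

theorem redex_inv {M B' N' : Term} (h : IntPar M (Term.app (Term.lam B') N')) :
    ∃ B N n, M = Term.app (Term.lam B) N ∧ SizedPar n B B' ∧ IntPar N N' := by
  cases h with
  | appL hM hL _ => exact absurd (hL.isValue_iff.mpr trivial) hM
  | appR _ hL hN => obtain ⟨B, n, rfl, hB⟩ := hL.lam_inv; exact ⟨B, _, _, rfl, hB, hN⟩

theorem reflTransGen_intRed {M V : Term} (h : IntPar M V) (hV : isValue V) :
    ReflTransGen IntRed M V := by
  cases h with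
  | var x => exact .refl
  | lam h =>
    refine h.reflTransGen_red.lift Term.lam fun _ _ hs => ⟨Ctx.lam hs, fun hh => ?_⟩
    exact (headRed_eq ▸ hh).not_isValue VBase.not_isValue trivial
  | appL | appR => exact hV.elim

end IntPar

theorem SizedPar.split {n : ℕ} {M N : Term} (h : SizedPar n M N) :
    ∃ L, ReflTransGen (HeadCtx VBase) M L ∧ IntPar L N := by
  induction n using Nat.strong_induction_on generalizing M N with
  | _ n ih =>
    cases h with
    | var x => exact ⟨_, .refl, .var x⟩
    | lam h => exact ⟨_, .refl, .lam h⟩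
    | @app M M' N N' a b hM hN =>
      obtain ⟨L₁, hML₁, hL₁⟩ := ih a (by omega) hM
      by_cases hv : isValue L₁
      · obtain ⟨L₂, hNL₂, hL₂⟩ := ih b (by omega) hN
        exact ⟨Term.app L₁ L₂, (HeadCtx.reflTransGen_appL hML₁ N).trans
          (HeadCtx.reflTransGen_appR hv hNL₂), .appR hv hL₁ hL₂⟩
      · exact ⟨Term.app L₁ N, HeadCtx.reflTransGen_appL hML₁ N, .appL hv hL₁ hN⟩
    | @beta M _ V _ m _ hV hM hVV =>
      obtain ⟨k, hk, hs⟩ := hM.subst 0 hV hVV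
      obtain ⟨L, hL, hLN⟩ := ih k (by omega) hs
      exact ⟨L, .head (.base (.beta M V hV)) hL, hLN⟩
    | @sigma1 M _ N _ L _ _ m _ hM hN hL =>
      obtain ⟨L₂, hNL₂, hL₂⟩ := ih m (by omega) hN
      exact ⟨_, .head (.base (.sigma1 M N L)) (HeadCtx.reflTransGen_appR trivial hNL₂),
        .appR trivial (.lam (.app hM (hL.lift 0))) hL₂⟩
    | @sigma3 V _ L _ N _ _ _ n hV hVV hL hN =>
      obtain ⟨L₂, hNL₂, hL₂⟩ := ih n (by omega) hN
      exact ⟨_, .head (.base (.sigma3 V L N hV)) (HeadCtx.reflTransGen_appR trivial hNL₂),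
        .appR trivial (.lam (.app (hVV.lift 0) hL)) hL₂⟩

theorem IntPar.commute_headCtx {M N P : Term} (h : IntPar M N) (hNP : HeadCtx VBase N P) :
    ∃ Q, ReflTransGen (HeadCtx VBase) M Q ∧ ∃ n, SizedPar n Q P := by
  induction h generalizing P with
  | var | lam => exact absurd trivial (hNP.not_isValue VBase.not_isValue)
  | @appL M M' N N' _ hM hMM' hN ih =>
    have hM' : ¬ isValue M' := hMM'.isValue_iff.not.mp hM
    cases hNP with
    | base hb =>
      cases hb with
      | beta => exact (hM' trivial).elim
      | sigma3 _ _ _ hv => exact (hM' hv).elim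
      | sigma1 =>
        obtain ⟨B, D, _, rfl, hB, hD⟩ := hMM'.redex_inv
        obtain ⟨_, hD⟩ := hD.exists_sizedPar
        exact ⟨_, .single (.base (.sigma1 B D N)), _, .app (.lam (.app hB (hN.lift 0))) hD⟩
    | appL _ hstep =>
      obtain ⟨Q, hMQ, _, hQ⟩ := ih hstep
      exact ⟨app Q N, HeadCtx.reflTransGen_appL hMQ N, _, .app hQ hN⟩
    | appR hv _ => exact absurd hv hM'
  | @appR V V' N N' hV hVV' hNN' _ ih =>
    have hV' : isValue V' := hVV'.isValue_iff.mp hV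
    cases hNP with
    | base hb =>
      cases hb with
      | beta _ _ hN' =>
        obtain ⟨B, _, rfl, hB⟩ := hVV'.lam_inv
        have hN : isValue N := hNN'.isValue_iff.mpr hN'
        obtain ⟨_, hNN'⟩ := hNN'.exists_sizedPar
        obtain ⟨_, -, hs⟩ := hB.subst 0 hN hNN'
        exact ⟨_, .single (.base (.beta B N hN)), _, hs⟩
      | sigma1 => exact hV'.elim
      | sigma3 =>
        obtain ⟨C, D, _, rfl, hC, hD⟩ := hNN'.redex_inv
        obtain ⟨_, hVV'⟩ := hVV'.exists_sizedPar
        obtain ⟨_, hD⟩ := hD.exists_sizedPar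
        exact ⟨_, .single (.base (.sigma3 V C D hV)), _, .app (.lam (.app (hVV'.lift 0) hC)) hD⟩
    | appL _ hstep => exact absurd hV' (hstep.not_isValue VBase.not_isValue)
    | appR _ hstep =>
      obtain ⟨Q, hNQ, _, hQ⟩ := ih hstep
      obtain ⟨_, hVV'⟩ := hVV'.exists_sizedPar
      exact ⟨app V Q, HeadCtx.reflTransGen_appR hV hNQ, _, .app hVV' hQ⟩

theorem IntPar.exists_value_of_reflTransGen {L N V : Term} (hLN : IntPar L N)
    (hNV : ReflTransGen (HeadCtx VBase) N V) (hV : isValue V) :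
    ∃ V', isValue V' ∧ ReflTransGen (HeadCtx VBase) L V' ∧ ReflTransGen IntRed V' V := by
  induction hNV using ReflTransGen.head_induction_on generalizing L with
  | refl => exact ⟨L, hLN.isValue_iff.mpr hV, .refl, hLN.reflTransGen_intRed hV⟩
  | head hstep _ ih =>
    obtain ⟨Q, hLQ, _, hQ⟩ := hLN.commute_headCtx hstep
    obtain ⟨L₁, hQL₁, hL₁⟩ := hQ.split
    obtain ⟨V', hV', hL₁V', hV'V⟩ := ih hL₁
    exact ⟨V', hV', hLQ.trans (hQL₁.trans hL₁V'), hV'V⟩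

theorem exists_headCtx_intRed_of_red {M V : Term} (hMV : ReflTransGen Red M V) (hV : isValue V) :
    ∃ V', isValue V' ∧ ReflTransGen (HeadCtx VBase) M V' ∧ ReflTransGen IntRed V' V := by
  induction hMV using ReflTransGen.head_induction_on with
  | refl => exact ⟨V, hV, .refl, .refl⟩
  | head hstep _ ih =>
    obtain ⟨V₁, hV₁, hM₁V₁, hV₁V⟩ := ih
    obtain ⟨_, hs⟩ := SizedPar.of_red hstep
    obtain ⟨L, hML, hL⟩ := hs.split
    obtain ⟨V', hV', hLV', hV'V₁⟩ := hL.exists_value_of_reflTransGen hM₁V₁ hV₁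
    exact ⟨V', hV', hML.trans hLV', hV'V₁.trans hV₁V⟩

namespace HeadCtx

theorem beta_eval_fun {M N V : Term} (h : ReflTransGen (HeadCtx BetaBase) (app M N) V)
    (hV : isValue V) : ∃ W, isValue W ∧ ReflTransGen (HeadCtx BetaBase) M W ∧
      ReflTransGen (HeadCtx BetaBase) (app W N) V := by
  generalize hT : app M N = T at h
  induction h using ReflTransGen.head_induction_on generalizing M with
  | refl => subst hT; exact hV.elim
  | head hstep hrest ih =>
    subst hT
    by_cases hM : isValue M
    · exact ⟨M, hM, .refl, .head hstep hrest⟩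
    cases hstep with
    | base hb => exact absurd (by cases hb; trivial) hM
    | appL _ hstep =>
      obtain ⟨W, hW, hMW, hWV⟩ := ih rfl
      exact ⟨W, hW, .head hstep hMW, hWV⟩
    | appR hv _ => exact absurd hv hM

theorem beta_eval_arg {U N V : Term} (hU : isValue U)
    (h : ReflTransGen (HeadCtx BetaBase) (app U N) V) (hV : isValue V) :
    ∃ W, isValue W ∧ ReflTransGen (HeadCtx BetaBase) N W ∧
      ReflTransGen (HeadCtx BetaBase) (app U W) V := by
  generalize hT : app U N = T at h
  induction h using ReflTransGen.head_induction_on generalizing N with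
  | refl => subst hT; exact hV.elim
  | head hstep hrest ih =>
    subst hT
    by_cases hN : isValue N
    · exact ⟨N, hN, .refl, .head hstep hrest⟩
    cases hstep with
    | base hb => cases hb with
      | beta _ _ hv => exact absurd hv hN
    | appL _ hstep => exact absurd hU (hstep.not_isValue BetaBase.not_isValue)
    | appR _ hstep =>
      obtain ⟨W, hW, hNW, hWV⟩ := ih rfl
      exact ⟨W, hW, .head hstep hNW, hWV⟩

theorem beta_eval_redex {B N V : Term} (h : ReflTransGen (HeadCtx BetaBase) (app (lam B) N) V)
    (hV : isValue V) : ∃ W, isValue W ∧ ReflTransGen (HeadCtx BetaBase) N W ∧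
      ReflTransGen (HeadCtx BetaBase) (B.subst 0 W) V := by
  obtain ⟨W, hW, hNW, hWV⟩ := beta_eval_arg (isValue_lam B) h hV
  refine ⟨W, hW, hNW, ?_⟩
  cases hWV using ReflTransGen.head_induction_on with
  | refl => exact hV.elim
  | head hstep hrest =>
    cases hstep with
    | base hb => cases hb; exact hrest
    | appL _ hstep => exact absurd trivial (hstep.not_isValue BetaBase.not_isValue)
    | appR _ hstep => exact absurd hW (hstep.not_isValue BetaBase.not_isValue)

theorem reflTransGen_beta_of_sigma {M N V : Term} (h : HeadCtx SigmaBase M N)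
    (hNV : ReflTransGen (HeadCtx BetaBase) N V) (hV : isValue V) :
    ReflTransGen (HeadCtx BetaBase) M V := by
  induction h generalizing V with
  | base h =>
    cases h with
    | sigma1 B N L =>
      obtain ⟨W, hW, hNW, hWV⟩ := beta_eval_redex hNV hV
      rw [subst, subst_lift] at hWV
      exact (reflTransGen_appL (reflTransGen_appR (isValue_lam B) hNW) L).trans
        (.head (appL L (base (.beta B W hW))) hWV)
    | sigma3 U C N hU =>
      obtain ⟨W, hW, hNW, hWV⟩ := beta_eval_redex hNV hV
      rw [subst, subst_lift] at hWV
      exact (reflTransGen_appR hU (reflTransGen_appR (isValue_lam C) hNW)).trans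
        (.head (appR hU (base (.beta C W hW))) hWV)
  | appL N _ ih =>
    obtain ⟨W, hW, hMW, hWV⟩ := beta_eval_fun hNV hV
    exact (reflTransGen_appL (ih hMW hW) N).trans hWV
  | appR hU _ ih =>
    obtain ⟨W, hW, hNW, hWV⟩ := beta_eval_arg hU hNV hV
    exact (reflTransGen_appR hU (ih hNW hW)).trans hWV

theorem reflTransGen_beta_of_vBase {M V : Term} (h : ReflTransGen (HeadCtx VBase) M V)
    (hV : isValue V) : ReflTransGen (HeadCtx BetaBase) M V := by
  induction h using ReflTransGen.head_induction_on with
  | refl => exact .refl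
  | head hstep _ ih =>
    rcases hstep.vBase_cases with hβ | hσ
    exacts [.head hβ ih, reflTransGen_beta_of_sigma hσ ih hV]

end HeadCtx

end Term

open Term Relation in
theorem reduction_to_value :
    (∀ M V : Term, isValue V → ReflTransGen Red M V →
      ∃ V2, isValue V2 ∧ ReflTransGen HeadBeta M V2 ∧ ReflTransGen IntRed V2 V) ∧
    (∀ M V : Term, isValue V →
      (ReflTransGen HeadBeta M V ↔ ReflTransGen HeadRed M V)) := by
  rw [headBeta_eq, headRed_eq]
  refine ⟨fun M V hV hMV => ?_, fun M V hV => ?_⟩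
  · obtain ⟨V', hV', hMV', hV'V⟩ := exists_headCtx_intRed_of_red hMV hV
    exact ⟨V', hV', HeadCtx.reflTransGen_beta_of_vBase hMV' hV', hV'V⟩
  · exact ⟨ReflTransGen.mono (fun _ _ => HeadCtx.mono BetaBase.vBase) M V,
      fun h => HeadCtx.reflTransGen_beta_of_vBase h hV⟩
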